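/- arXiv:2010.07084 — 2 statements merged into one kernel-verified Lean document; each statement's English description precedes it below -/
import Mathlib

section
/- For every ε > 0 there exist infinitely many primes p with the following property: there exists a graph G and a finite abelian group Γ' with |Γ'| ≥ (2 − ε)·p such that G is ℤ_p-connected but G is not Γ'-connected. -/
/-- A finite multigraph (no loops) given with a reference orientation:
each edge `e` is directed from `src e` to `tgt e`. -/
structure Multigraph where
  V : Type
  E : Type
  vFintype : Fintype V
  eFintype : Fintype E
  vDecEq : DecidableEq V
  eDecEq : DecidableEq E
  src : E → V
  tgt : E → V
  no_loop : ∀ e, src e ≠ tgt e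

attribute [instance] Multigraph.vFintype Multigraph.eFintype Multigraph.vDecEq Multigraph.eDecEq

namespace Multigraph

/-- The net out-flow of `f` at a vertex `v` :
the sum of `f` over edges leaving `v` minus the sum of `f` over edges entering `v`. -/
def netFlow (G : Multigraph) {Γ : Type} [AddCommGroup Γ] (f : G.E → Γ) (v : G.V) : Γ :=
  (∑ e : G.E, if G.src e = v then f e else 0) - (∑ e : G.E, if G.tgt e = v then f e else 0)

/-- `f` is a `Γ`-flow: net flow zero at every vertex. -/
def IsFlow (G : Multigraph) {Γ : Type} [AddCommGroup Γ] (f : G.E → Γ) : Prop :=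
  ∀ v : G.V, G.netFlow f v = 0

/-- `G` is `Γ`-connected: for every `β : V → Γ` summing to zero there is a
nowhere-zero `f : E → Γ` whose net flow at each vertex `v` is `β v`. -/
def GroupConnected (G : Multigraph) (Γ : Type) [AddCommGroup Γ] : Prop :=
  ∀ β : G.V → Γ, (∑ v : G.V, β v) = 0 →
    ∃ f : G.E → Γ, (∀ e, f e ≠ 0) ∧ ∀ v : G.V, G.netFlow f v = β v

/-- `G` is `Γ`-colorable: for every forbidding function `φ` on the edges there is a
coloring `c` of the vertices with `c(tgt e) - c(src e) ≠ φ e` for every edge `e`. -/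
def GroupColorable (G : Multigraph) (Γ : Type) [AddCommGroup Γ] : Prop :=
  ∀ φ : G.E → Γ, ∃ c : G.V → Γ, ∀ e : G.E, c (G.tgt e) - c (G.src e) ≠ φ e

/-- Any two vertices of `G` can be joined by a walk avoiding the edges of `D`. -/
def ConnectedAvoiding (G : Multigraph) (D : Set G.E) : Prop :=
  ∀ u v : G.V, Relation.ReflTransGen
    (fun a b => ∃ e : G.E, e ∉ D ∧
      ((G.src e = a ∧ G.tgt e = b) ∨ (G.src e = b ∧ G.tgt e = a))) u v

/-- `G` is connected and stays connected after deleting any single edge. -/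
def TwoEdgeConnected (G : Multigraph) : Prop :=
  ∀ D : Finset G.E, D.card ≤ 1 → G.ConnectedAvoiding ↑D

/-- `G` is connected and stays connected after deleting any two edges. -/
def ThreeEdgeConnected (G : Multigraph) : Prop :=
  ∀ D : Finset G.E, D.card ≤ 2 → G.ConnectedAvoiding ↑D

/-- A cycle in a multigraph: cyclically arranged distinct vertices joined by
distinct edges; since there are no loops, a cycle has length at least `2`. -/
structure Cycle (G : Multigraph) where
  n : ℕ
  two_le : 2 ≤ n
  verts : ZMod n → G.V
  edges : ZMod n → G.E
  vinj : Function.Injective verts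
  einj : Function.Injective edges
  compat : ∀ i : ZMod n,
    (G.src (edges i) = verts i ∧ G.tgt (edges i) = verts (i + 1)) ∨
    (G.src (edges i) = verts (i + 1) ∧ G.tgt (edges i) = verts i)

/-- Two edges are cycle-equivalent if every cycle containing one of them contains the other. -/
def CycleEquiv (G : Multigraph) (e₁ e₂ : G.E) : Prop :=
  ∀ C : G.Cycle, e₁ ∈ Set.range C.edges ↔ e₂ ∈ Set.range C.edges

/-- The cyclicity `q(G)` : the size of a largest cycle-equivalence class. -/
noncomputable def cyclicity (G : Multigraph) : ℕ :=
  Finset.univ.sup fun e : G.E => Nat.card {e' : G.E // G.CycleEquiv e e'}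

/-- The degree of a vertex (no loops, so each incident edge counts once). -/
noncomputable def degree (G : Multigraph) (v : G.V) : ℕ :=
  Nat.card {e : G.E // G.src e = v ∨ G.tgt e = v}

/-- The graph `G - v` obtained by deleting the vertex `v` and all incident edges. -/
def deleteVertex (G : Multigraph) (v : G.V) : Multigraph where
  V := {u : G.V // u ≠ v}
  E := {e : G.E // G.src e ≠ v ∧ G.tgt e ≠ v}
  vFintype := inferInstance
  eFintype := inferInstance
  vDecEq := inferInstance
  eDecEq := inferInstance
  src := fun e => ⟨G.src e.1, e.2.1⟩
  tgt := fun e => ⟨G.tgt e.1, e.2.2⟩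
  no_loop := fun e h => G.no_loop e.1 (congrArg Subtype.val h)

/-- The out-degree of `v` in the orientation of `G` obtained by re-orienting according
to `σ` (edge `e` keeps its direction if `σ e = true`, and is reversed otherwise). -/
noncomputable def outDeg (G : Multigraph) (σ : G.E → Bool) (v : G.V) : ℕ :=
  Nat.card {e : G.E // (σ e = true ∧ G.src e = v) ∨ (σ e = false ∧ G.tgt e = v)}

/-- A set of edges is a spanning tree if it connects all vertices and contains no cycle. -/
def IsSpanningTree (G : Multigraph) (T : Set G.E) : Prop :=
  G.ConnectedAvoiding Tᶜ ∧ ∀ C : G.Cycle, ¬ (Set.range C.edges ⊆ T)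

end Multigraph

/-- The graph `G_{q,k}` : two vertices `s = Sum.inl 0` and `t = Sum.inl 1` joined by
`q` internally disjoint paths, each of length `k`; edge `(i, j)` is the `j`-th edge
of the `i`-th path, directed from `s` towards `t`. -/
def pathsGraph (q k : ℕ) : Multigraph where
  V := Sum (Fin 2) (Fin q × Fin (k - 1))
  E := Fin q × Fin k
  vFintype := inferInstance
  eFintype := inferInstance
  vDecEq := inferInstance
  eDecEq := inferInstance
  src := fun p =>
    if h : (p.2 : ℕ) = 0 then Sum.inl 0
    else Sum.inr (p.1, ⟨(p.2 : ℕ) - 1, by have := p.2.isLt; omega⟩)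
  tgt := fun p =>
    if h : (p.2 : ℕ) = k - 1 then Sum.inl 1
    else Sum.inr (p.1, ⟨(p.2 : ℕ), by have := p.2.isLt; omega⟩)
  no_loop := by
    rintro ⟨i, j⟩ h
    dsimp only at h
    split_ifs at h with h0 h1 h1 <;>
      first
      | exact absurd (Sum.inl.inj h) (by decide)
      | exact Sum.noConfusion h
      | · have h2 := congrArg Fin.val (congrArg Prod.snd (Sum.inr.inj h))
          simp only at h2
          omega

/-- The simple sum `Π'` of a finite subset `Π` of an abelian group: all elements of the
form `α₁a₁ + ⋯ + αₖaₖ` where `Π = {a₁, …, aₖ}` and each `αᵢ ∈ {0, 1, -1}`. -/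
def simpleSum {Γ : Type} [AddCommGroup Γ] (S : Finset Γ) : Set Γ :=
  {x | ∃ α : Γ → ℤ, (∀ a, α a = 0 ∨ α a = 1 ∨ α a = -1) ∧ x = ∑ a ∈ S, α a • a}

/-!
Take `G` to be `q` internally disjoint `s`–`t` paths of length `k` (`pathsGraph q k`) with `q`
even, `k = p - ⌊p/q⌋ - 2`, and `Γ' = ℤ₂ × ℤ_k`; then `|Γ'| = 2k ≥ (2 - ε)p` once `q ≥ 8/ε` and
`p` is large. A flow meeting the demands at the interior vertices is determined on each path by
its value on the first edge, shifted by the partial sums of the demands, so on each path exactly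
`k` values of the first edge are forbidden. Over `ℤ_p` the `q` sets of allowed values have
`p - k` elements each and `q (p - k) ≥ p + q - 1`, so by Cauchy–Davenport their sumset is all of
`ℤ_p` and the demand at `s` can be met as well. Over `ℤ₂ × ℤ_k`, demand `(0, 1)` at every
interior vertex makes the second coordinate run through all of `ℤ_k` along each path, so every
first edge needs first coordinate `1`, and an even number of paths cannot carry `(1, 0)` out of `s`.
-/

namespace Multigraph

variable {Γ : Type} [AddCommGroup Γ] (G : Multigraph)

theorem sum_netFlow (f : G.E → Γ) : ∑ v, G.netFlow f v = 0 := by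
  unfold netFlow
  rw [Finset.sum_sub_distrib, Finset.sum_comm, Finset.sum_comm (t := Finset.univ (α := G.E))]
  simp

theorem netFlow_eq_sum_sub_sum {ι κ : Type} [Fintype ι] [Fintype κ] (f : G.E → Γ) (v : G.V)
    (out : ι → G.E) (into : κ → G.E) (hout : out.Injective) (hinto : into.Injective)
    (hsrc : ∀ e, G.src e = v ↔ ∃ i, e = out i)
    (htgt : ∀ e, G.tgt e = v ↔ ∃ j, e = into j) :
    G.netFlow f v = ∑ i, f (out i) - ∑ j, f (into j) := by
  unfold netFlow
  congr 1 <;> symm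
  · refine Fintype.sum_of_injective out hout _ _ (fun e he => if_neg ?_) fun i => ?_
    · exact fun h => he (((hsrc e).1 h).imp fun _ => Eq.symm)
    · exact (if_pos ((hsrc _).2 ⟨i, rfl⟩)).symm
  · refine Fintype.sum_of_injective into hinto _ _ (fun e he => if_neg ?_) fun j => ?_
    · exact fun h => he (((htgt e).1 h).imp fun _ => Eq.symm)
    · exact (if_pos ((htgt _).2 ⟨j, rfl⟩)).symm

theorem netFlow_eq_of_forall_ne {f : G.E → Γ} {β : G.V → Γ} (hβ : ∑ v, β v = 0) (t : G.V)
    (h : ∀ v ≠ t, G.netFlow f v = β v) (v : G.V) : G.netFlow f v = β v := by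
  obtain rfl | hv := eq_or_ne v t
  · have := G.sum_netFlow f
    rw [← Finset.add_sum_erase _ _ (Finset.mem_univ v)] at this hβ
    rw [Finset.sum_congr rfl fun w hw => h w (Finset.ne_of_mem_erase hw)] at this
    exact add_right_cancel (this.trans hβ.symm)
  · exact h v hv

variable {G} in
theorem GroupConnected.exists_netFlow_eq_of_ne (hG : G.GroupConnected Γ) (t : G.V)
    (β : G.V → Γ) :
    ∃ f : G.E → Γ, (∀ e, f e ≠ 0) ∧ ∀ v ≠ t, G.netFlow f v = β v := by
  obtain ⟨f, hf, hflow⟩ := hG (Function.update β t (β t - ∑ v, β v)) (by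
    rw [Finset.sum_update_of_mem (Finset.mem_univ t),
      Finset.sum_eq_add_sum_sdiff_singleton_of_mem (Finset.mem_univ t)]
    abel)
  exact ⟨f, hf, fun v hv => (hflow v).trans (Function.update_of_ne hv _ _)⟩

end Multigraph

open scoped Pointwise

namespace ZMod

variable {p : ℕ} {ι : Type} [DecidableEq ι]

theorem min_le_card_finsetSum (hp : p.Prime) (s : Finset ι) {A : ι → Finset (ZMod p)}
    (hA : ∀ i ∈ s, (A i).Nonempty) :
    min p (∑ i ∈ s, (A i).card + 1 - s.card) ≤ (∑ i ∈ s, A i).card := by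
  induction s using Finset.induction_on with
  | empty => simp
  | insert a s ha ih =>
    have hAa := hA a (Finset.mem_insert_self a s)
    have hAs : ∀ i ∈ s, (A i).Nonempty := fun i hi => hA i (Finset.mem_insert_of_mem hi)
    have hcard_le : s.card ≤ ∑ i ∈ s, (A i).card :=
      (Finset.card_eq_sum_ones s).trans_le (Finset.sum_le_sum fun i hi => (hAs i hi).card_pos)
    have ih := ih hAs
    have hsum_ne : (∑ i ∈ s, A i).Nonempty := by
      rw [← Finset.card_pos]
      exact (lt_min hp.pos (by omega)).trans_le ih
    have hcd := cauchy_davenport hp hAa hsum_ne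
    rw [Finset.sum_insert ha, Finset.sum_insert ha, Finset.card_insert_of_notMem ha]
    have := hAa.card_pos
    omega

theorem exists_finsetSum_eq (hp : p.Prime) (s : Finset ι) {A : ι → Finset (ZMod p)}
    (hA : ∀ i ∈ s, (A i).Nonempty) (hcard : p + s.card ≤ ∑ i ∈ s, (A i).card + 1) (b : ZMod p) :
    ∃ γ : ι → ZMod p, (∀ i ∈ s, γ i ∈ A i) ∧ ∑ i ∈ s, γ i = b := by
  have : NeZero p := ⟨hp.ne_zero⟩
  have huniv : ∑ i ∈ s, A i = Finset.univ := by
    refine Finset.eq_univ_of_card _ (le_antisymm (Finset.card_le_univ _) ?_)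
    rw [ZMod.card]
    exact (le_min le_rfl (by omega)).trans (min_le_card_finsetSum hp s hA)
  have hb : b ∈ ((∑ i ∈ s, A i : Finset (ZMod p)) : Set (ZMod p)) := by simp [huniv]
  rw [Finset.coe_sum, Set.mem_finsetSum] at hb
  obtain ⟨γ, hγ, hsum⟩ := hb
  exact ⟨γ, fun i hi => hγ hi, hsum⟩

end ZMod

namespace pathsGraph

variable {Γ : Type} [AddCommGroup Γ] {q k : ℕ}

theorem src_eq_inl_zero_iff (e : (pathsGraph q k).E) :
    (pathsGraph q k).src e = Sum.inl 0 ↔ (e.2 : ℕ) = 0 := by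
  simp only [pathsGraph]
  split_ifs with h <;> simp [h]

theorem tgt_ne_inl_zero (e : (pathsGraph q k).E) : (pathsGraph q k).tgt e ≠ Sum.inl 0 := by
  simp only [pathsGraph]
  split_ifs <;> simp

theorem src_eq_inr_iff (e : (pathsGraph q k).E) (i : Fin q) (j : Fin (k - 1)) :
    (pathsGraph q k).src e = Sum.inr (i, j) ↔ e = (i, ⟨j + 1, by omega⟩) := by
  obtain ⟨i', j'⟩ := e
  simp only [pathsGraph]
  split_ifs with h <;> simp [Prod.ext_iff, Fin.ext_iff] <;> omega

theorem tgt_eq_inr_iff (e : (pathsGraph q k).E) (i : Fin q) (j : Fin (k - 1)) :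
    (pathsGraph q k).tgt e = Sum.inr (i, j) ↔ e = (i, ⟨j, by omega⟩) := by
  obtain ⟨i', j'⟩ := e
  simp only [pathsGraph]
  split_ifs with h <;> simp [Prod.ext_iff, Fin.ext_iff]
  omega

theorem netFlow_inl_zero (hk : 0 < k) (f : (pathsGraph q k).E → Γ) :
    (pathsGraph q k).netFlow f (Sum.inl 0) = ∑ i, f (i, ⟨0, hk⟩) := by
  rw [Multigraph.netFlow_eq_sum_sub_sum _ f (Sum.inl 0) (fun i => (i, ⟨0, hk⟩)) Empty.elim
    (fun i i' h => congrArg Prod.fst h) (fun a => a.elim)]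
  · simp
  · intro e
    rw [src_eq_inl_zero_iff]
    exact ⟨fun h => ⟨e.1, Prod.ext rfl (Fin.ext h)⟩, fun ⟨i, hi⟩ => hi ▸ rfl⟩
  · simp [tgt_ne_inl_zero]

theorem netFlow_inr (f : (pathsGraph q k).E → Γ) (i : Fin q) (j : Fin (k - 1)) :
    (pathsGraph q k).netFlow f (Sum.inr (i, j)) =
      f (i, ⟨j + 1, by omega⟩) - f (i, ⟨j, by omega⟩) := by
  rw [Multigraph.netFlow_eq_sum_sub_sum _ f (Sum.inr (i, j))
    (fun _ : Unit => (i, ⟨j + 1, by omega⟩)) (fun _ : Unit => (i, ⟨j, by omega⟩))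
    (Function.injective_of_subsingleton _) (Function.injective_of_subsingleton _)]
  · simp
  · intro e
    simp [src_eq_inr_iff]
  · intro e
    simp [tgt_eq_inr_iff]

def pathSum (β : (pathsGraph q k).V → Γ) (i : Fin q) (m : ℕ) : Γ :=
  ∑ j ∈ Finset.range m, if h : j < k - 1 then β (Sum.inr (i, ⟨j, h⟩)) else 0

theorem pathSum_zero (β : (pathsGraph q k).V → Γ) (i : Fin q) : pathSum β i 0 = 0 :=
  Finset.sum_range_zero _

theorem pathSum_succ (β : (pathsGraph q k).V → Γ) (i : Fin q) (j : Fin (k - 1)) :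
    pathSum β i (j + 1) = pathSum β i j + β (Sum.inr (i, j)) := by
  rw [pathSum, Finset.sum_range_succ, dif_pos j.isLt]
  rfl

theorem pathSum_eq_nsmul {β : (pathsGraph q k).V → Γ} {u : Γ}
    (hβ : ∀ v, β (Sum.inr v) = u) (i : Fin q) {m : ℕ} (hm : m ≤ k - 1) :
    pathSum β i m = m • u := by
  rw [pathSum, Finset.sum_congr rfl fun j hj => by
    rw [dif_pos ((Finset.mem_range.1 hj).trans_le hm), hβ], Finset.sum_const, Finset.card_range]

theorem netFlow_add_pathSum (γ : Fin q → Γ) (β : (pathsGraph q k).V → Γ) (i : Fin q)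
    (j : Fin (k - 1)) :
    (pathsGraph q k).netFlow (fun e => γ e.1 + pathSum β e.1 e.2) (Sum.inr (i, j)) =
      β (Sum.inr (i, j)) := by
  rw [netFlow_inr]
  simp only [pathSum_succ]
  abel

theorem eq_add_pathSum_of_netFlow (hk : 0 < k) {f : (pathsGraph q k).E → Γ}
    {β : (pathsGraph q k).V → Γ}
    (h : ∀ i j, (pathsGraph q k).netFlow f (Sum.inr (i, j)) = β (Sum.inr (i, j)))
    (i : Fin q) (j : Fin k) : f (i, j) = f (i, ⟨0, hk⟩) + pathSum β i j := by
  obtain ⟨m, hm⟩ := j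
  induction m with
  | zero => rw [pathSum_zero, add_zero]
  | succ m ih =>
    have hstep := h i ⟨m, by omega⟩
    rw [netFlow_inr, sub_eq_iff_eq_add] at hstep
    rw [pathSum_succ β i ⟨m, by omega⟩, hstep, ih (by omega)]
    abel

theorem groupConnected_zmod {p : ℕ} (hp : p.Prime) (hk : 0 < k)
    (hpqk : p + q ≤ q * (p - k) + 1) : (pathsGraph q k).GroupConnected (ZMod p) := by
  have : NeZero p := ⟨hp.ne_zero⟩
  intro β hβ
  -- on path `i` the flow `γ i + pathSum β i j` vanishes exactly when `γ i` is forbidden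
  let forbidden (i : Fin q) : Finset (ZMod p) := Finset.univ.image fun j : Fin k => -pathSum β i j
  have hcard (i : Fin q) : p - k ≤ ((forbidden i)ᶜ).card := by
    have : (forbidden i).card ≤ k := Finset.card_image_le.trans_eq (by simp)
    rw [Finset.card_compl, ZMod.card]
    omega
  have hpk : 0 < p - k := Nat.pos_of_ne_zero fun h => by
    rw [h, mul_zero] at hpqk
    linarith [hp.two_le]
  have hsum : q * (p - k) ≤ ∑ i, ((forbidden i)ᶜ).card := by
    simpa using Finset.sum_le_sum fun i (_ : i ∈ Finset.univ) => hcard i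
  obtain ⟨γ, hγ, hγsum⟩ := ZMod.exists_finsetSum_eq hp Finset.univ (A := fun i => (forbidden i)ᶜ)
    (fun i _ => Finset.card_pos.1 (hpk.trans_le (hcard i))) (by rw [Finset.card_univ, Fintype.card_fin]; omega)
    (β (Sum.inl 0))
  refine ⟨fun e => γ e.1 + pathSum β e.1 e.2, ?_, ?_⟩
  · rintro ⟨i, j⟩ h
    refine Finset.mem_compl.1 (hγ i (Finset.mem_univ i)) (Finset.mem_image.2 ⟨j, by simp, ?_⟩)
    exact (eq_neg_of_add_eq_zero_left h).symm
  · refine Multigraph.netFlow_eq_of_forall_ne _ hβ (Sum.inl 1) ?_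
    rintro (v | ⟨i, j⟩) hv
    · obtain rfl : v = 0 := by fin_cases v; exacts [rfl, absurd rfl hv]
      simpa [netFlow_inl_zero hk, pathSum_zero] using hγsum
    · exact netFlow_add_pathSum γ β i j

theorem not_groupConnected_zmod_two_prod (hq : Even q) (hk : 0 < k) :
    ¬ (pathsGraph q k).GroupConnected (ZMod 2 × ZMod k) := by
  have : NeZero k := ⟨hk.ne'⟩
  intro hG
  let β : (pathsGraph q k).V → ZMod 2 × ZMod k := Sum.elim (fun _ => (1, 0)) fun _ => (0, 1)
  obtain ⟨f, hf, hflow⟩ := hG.exists_netFlow_eq_of_ne (Sum.inl 1) β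
  have hpath (i : Fin q) (j : Fin k) :
      f (i, j) = f (i, ⟨0, hk⟩) + ((0 : ZMod 2), (j : ZMod k)) := by
    rw [eq_add_pathSum_of_netFlow hk (fun i j => hflow _ Sum.inr_ne_inl) i j,
      pathSum_eq_nsmul (fun _ => rfl) i (by omega)]
    simp
  -- the second coordinate runs through all of `ZMod k` along a path, so the first cannot be `0`
  have hfst (i : Fin q) : (f (i, ⟨0, hk⟩)).1 = 1 := by
    by_contra h
    have h0 : (f (i, ⟨0, hk⟩)).1 = 0 := by
      generalize (f (i, ⟨0, hk⟩)).1 = a at h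
      revert a
      decide
    refine hf (i, ⟨(-(f (i, ⟨0, hk⟩)).2).val, ZMod.val_lt _⟩) ?_
    rw [hpath, ZMod.natCast_zmod_val]
    exact Prod.ext (by simpa using h0) (by simp)
  have hs := congrArg Prod.fst (hflow (Sum.inl 0) (Sum.inl_injective.ne zero_ne_one))
  rw [netFlow_inl_zero hk, Prod.fst_sum] at hs
  simp only [hfst] at hs
  simp [β, hq.natCast_zmod_two] at hs

end pathsGraph

theorem two_sub_mul_le_two_mul_sub {ε : ℝ} {p q d : ℕ} (hq : 8 ≤ ε * q) (hp : 16 ≤ ε * p)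
    (hdq : d * q ≤ p) (hdp : d + 2 ≤ p) : (2 - ε) * p ≤ ((2 * (p - d - 2) : ℕ) : ℝ) := by
  have hdq' : (d : ℝ) * q ≤ p := by exact_mod_cast hdq
  have hε : 0 ≤ ε := by nlinarith [(Nat.cast_nonneg q : (0 : ℝ) ≤ q)]
  rw [Nat.sub_sub, Nat.cast_mul, Nat.cast_sub hdp]
  push_cast
  nlinarith [mul_nonneg hε (sub_nonneg.2 hdq'), (Nat.cast_nonneg d : (0 : ℝ) ≤ d)]

/-- For every `ε > 0` there are infinitely many primes `p` for which
some graph `G` is `ℤ_p`-connected but fails to be `Γ'`-connected for some finite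
abelian group `Γ'` with `|Γ'| ≥ (2 - ε)·p`. -/
theorem statement2 (ε : ℝ) (hε : 0 < ε) :
    {p : ℕ | p.Prime ∧
      ∃ (G : Multigraph) (Γ' : Type) (iΓ' : AddCommGroup Γ') (jΓ' : Fintype Γ'),
        (2 - ε) * (p : ℝ) ≤ (@Fintype.card Γ' jΓ' : ℝ) ∧
        G.GroupConnected (ZMod p) ∧
        ¬ @Multigraph.GroupConnected G Γ' iΓ' }.Infinite := by
  set q := 2 * ⌈4 / ε⌉₊
  have hq2 : 2 ≤ q := Nat.mul_le_mul_left 2 (Nat.ceil_pos.2 (by positivity))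
  have hεq : 8 ≤ ε * q := by
    have := Nat.le_ceil (4 / ε)
    rw [div_le_iff₀ hε] at this
    push_cast [q]
    linarith
  refine (Nat.infinite_setOfPred_prime.sdiff (Set.finite_Iio (⌈16 / ε⌉₊ + 5))).mono ?_
  rintro p ⟨hp, hpN⟩
  rw [Set.mem_Iio, not_lt] at hpN
  have hεp : 16 ≤ ε * p := by
    have := (Nat.le_ceil (16 / ε)).trans (Nat.cast_le.2 (Nat.le_of_add_right_le hpN))
    rwa [div_le_iff₀ hε, mul_comm] at this
  have hmod : p < q * (p / q + 1) := Nat.lt_mul_div_succ p (by omega)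
  have hdq : p / q * q ≤ p := Nat.div_mul_le_self p q
  have hdiv : p / q ≤ p / 2 := Nat.div_le_div_left hq2 two_pos
  generalize p / q = d at hmod hdq hdiv
  have hk : 0 < p - d - 2 := by omega
  have : NeZero (p - d - 2) := ⟨hk.ne'⟩
  refine ⟨hp, pathsGraph q (p - d - 2), ZMod 2 × ZMod (p - d - 2), inferInstance, inferInstance,
    ?_, pathsGraph.groupConnected_zmod hp hk ?_,
    pathsGraph.not_groupConnected_zmod_two_prod (even_two_mul _) hk⟩
  · rw [Fintype.card_prod, ZMod.card, ZMod.card]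
    exact two_sub_mul_le_two_mul_sub hεq hεp hdq (by omega)
  · rw [show p - (p - d - 2) = d + 2 by omega]
    nlinarith
end

section
/- If a graph G is ℤ₃-colorable, then G is Γ-colorable for every finite abelian group Γ with |Γ| ≥ 5 (i.e., h(3) ≤ 5). -/
/-!
For `|Γ| = 5`, `Γ` has an element `g` of order `5`, and `x ↦ x.val • g` embeds `ℤ₃` into `Γ`
so that differences of images determine differences in `ℤ₃` (they are `k • g` with `|k| ≤ 4`).
Pulling a forbidding function back along this map and pushing a `ℤ₃`-coloring forward gives a
`Γ`-coloring.

For `|Γ| ≥ 6`, colour greedily. A coloring `c` for `φ` together with the nowhere-zero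
`φ - δc` determines `φ`, so a `ℤ₃`-colorable graph with `n` vertices and `m` edges has
`3^m ≤ 3^n 2^m`, which for `n > 0` forces `m < 3n`. Hence it has a vertex of degree at most
`5`, and deleting it keeps the graph `ℤ₃`-colorable.
-/

open Finset

theorem ZMod.sub_eq_sub_of_val_nsmul_sub_eq {Γ : Type} [AddCommGroup Γ] {n : ℕ} [NeZero n]
    {g : Γ} (hg : 2 * n - 1 ≤ addOrderOf g) (x y x' y' : ZMod n)
    (h : x.val • g - y.val • g = x'.val • g - y'.val • g) : x - y = x' - y' := by
  set k : ℤ := x.val - y.val - (x'.val - y'.val) with hk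
  have hkg : k • g = 0 := by
    rw [hk, sub_zsmul, sub_zsmul, sub_zsmul]
    simp only [natCast_zsmul, ← sub_eq_add_neg, h, sub_self]
  have hk0 : k = 0 := by
    refine Int.eq_zero_of_abs_lt_dvd (addOrderOf_dvd_iff_zsmul_eq_zero.mpr hkg) ?_
    have := x.val_lt; have := y.val_lt; have := x'.val_lt; have := y'.val_lt
    rw [abs_lt]; constructor <;> omega
  have hcast : ((k : ℤ) : ZMod n) = 0 := by rw [hk0, Int.cast_zero]
  simpa [hk, sub_eq_zero] using hcast

namespace Multigraph

variable {Γ Γ' : Type} [AddCommGroup Γ] [AddCommGroup Γ']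

theorem GroupColorable.of_sub_injective {G : Multigraph} (h : G.GroupColorable Γ) (s : Γ → Γ')
    (hs : ∀ x y x' y', s x - s y = s x' - s y' → x - y = x' - y') :
    G.GroupColorable Γ' := by
  classical
  intro φ
  obtain ⟨c, hc⟩ := h fun e =>
    if hp : ∃ p : Γ × Γ, s p.1 - s p.2 = φ e then hp.choose.1 - hp.choose.2 else 0
  refine ⟨s ∘ c, fun e he => hc e ?_⟩
  have hp : ∃ p : Γ × Γ, s p.1 - s p.2 = φ e := ⟨(c (G.tgt e), c (G.src e)), he⟩
  rw [dif_pos hp]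
  exact hs _ _ _ _ (he.trans hp.choose_spec.symm)

theorem GroupColorable.of_zmod_of_le_addOrderOf {G : Multigraph} {n : ℕ} [NeZero n]
    (h : G.GroupColorable (ZMod n)) {g : Γ} (hg : 2 * n - 1 ≤ addOrderOf g) :
    G.GroupColorable Γ :=
  h.of_sub_injective (fun x => x.val • g) (ZMod.sub_eq_sub_of_val_nsmul_sub_eq hg)

theorem GroupColorable.card_pow_le [Fintype Γ] {G : Multigraph} (h : G.GroupColorable Γ) :
    Fintype.card Γ ^ Fintype.card G.E ≤
      Fintype.card Γ ^ Fintype.card G.V * (Fintype.card Γ - 1) ^ Fintype.card G.E := by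
  classical
  choose c hc using h
  let encode : (G.E → Γ) → (G.V → Γ) × (G.E → {x : Γ // x ≠ 0}) := fun φ =>
    (c φ, fun e => ⟨φ e - (c φ (G.tgt e) - c φ (G.src e)), sub_ne_zero.mpr (hc φ e).symm⟩)
  have hinj : Function.Injective encode := by
    intro φ₁ φ₂ h
    simp only [encode, Prod.mk.injEq, funext_iff, Subtype.mk.injEq] at h
    funext e
    simpa [h.1] using h.2 e
  simpa [Fintype.card_fun, Fintype.card_subtype_compl, Fintype.card_unique]
    using Fintype.card_le_of_injective encode hinj

theorem sum_degree_eq_two_mul_card_edges (G : Multigraph) :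
    ∑ v, G.degree v = 2 * Fintype.card G.E := by
  classical
  have hdeg : ∀ v, G.degree v =
      ∑ e, ((if G.src e = v then 1 else 0) + if G.tgt e = v then 1 else 0) := by
    intro v
    rw [degree, Nat.card_eq_fintype_card, Fintype.card_subtype, card_filter]
    refine sum_congr rfl fun e _ => ?_
    have := G.no_loop e
    split_ifs <;> simp_all
  simp only [hdeg]
  rw [sum_comm]
  simp only [sum_add_distrib, sum_ite_eq, mem_univ, if_true, sum_const, card_univ, smul_eq_mul,
    mul_one]
  omega

theorem exists_degree_lt_six_of_groupColorable_zmod3 {G : Multigraph} [Nonempty G.V]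
    (h : G.GroupColorable (ZMod 3)) : ∃ v, G.degree v < 6 := by
  by_contra! hdeg
  set n := Fintype.card G.V
  set m := Fintype.card G.E
  have hn : 0 < n := Fintype.card_pos
  have hmn : 3 * n ≤ m := by
    have := sum_le_sum fun v (_ : v ∈ univ) => hdeg v
    rw [sum_degree_eq_two_mul_card_edges, sum_const, card_univ, smul_eq_mul] at this
    omega
  have hcount : 3 ^ m ≤ 3 ^ n * 2 ^ m := by simpa using h.card_pow_le
  have : 27 ^ m < 27 ^ m :=
    calc 27 ^ m = (3 ^ m) ^ 3 := by rw [← pow_mul, mul_comm, pow_mul]; norm_num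
      _ ≤ (3 ^ n * 2 ^ m) ^ 3 := Nat.pow_le_pow_left hcount 3
      _ = 3 ^ (3 * n) * 8 ^ m := by
          rw [mul_pow, ← pow_mul, ← pow_mul, mul_comm n, mul_comm m, pow_mul 2 3 m]; norm_num
      _ ≤ 3 ^ m * 8 ^ m := Nat.mul_le_mul_right _ (Nat.pow_le_pow_right (by norm_num) hmn)
      _ = 24 ^ m := by rw [← mul_pow]; norm_num
      _ < 27 ^ m := Nat.pow_lt_pow_left (by norm_num) (by omega)
  exact lt_irrefl _ this

theorem GroupColorable.deleteVertex {G : Multigraph} (h : G.GroupColorable Γ) (v : G.V) :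
    (G.deleteVertex v).GroupColorable Γ := by
  classical
  intro φ
  obtain ⟨c, hc⟩ := h fun e => if he : G.src e ≠ v ∧ G.tgt e ≠ v then φ ⟨e, he⟩ else 0
  refine ⟨fun u => c u.1, fun e => ?_⟩
  have := hc e.1
  rwa [dif_pos e.2] at this

theorem card_deleteVertex (G : Multigraph) (v : G.V) :
    Fintype.card (G.deleteVertex v).V = Fintype.card G.V - 1 := by
  classical
  exact Fintype.card_subtype_compl (· = v) |>.trans (by rw [Fintype.card_subtype_eq])

theorem GroupColorable.of_deleteVertex [Fintype Γ] {G : Multigraph} {v : G.V}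
    (hv : G.degree v < Fintype.card Γ) (h : (G.deleteVertex v).GroupColorable Γ) :
    G.GroupColorable Γ := by
  classical
  intro φ
  obtain ⟨c', hc'⟩ := h fun e => φ e.1
  let c₀ : G.V → Γ := fun u => if hu : u = v then 0 else c' ⟨u, hu⟩
  -- the value that `c v` must avoid because of the edge `e`
  let forbidden : G.E → Γ := fun e =>
    if G.src e = v then c₀ (G.tgt e) - φ e else φ e + c₀ (G.src e)
  have hcard : (univ.filter (fun e => G.src e = v ∨ G.tgt e = v) |>.image forbidden).card <
      (univ : Finset Γ).card := by
    refine card_image_le.trans_lt ?_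
    rwa [card_univ, ← Fintype.card_subtype, ← Nat.card_eq_fintype_card]
  obtain ⟨a, -, ha⟩ := exists_mem_notMem_of_card_lt_card hcard
  refine ⟨Function.update c₀ v a, fun e => ?_⟩
  by_cases hs : G.src e = v
  · have ht : G.tgt e ≠ v := fun ht => G.no_loop e (hs.trans ht.symm)
    rw [hs, Function.update_self, Function.update_of_ne ht]
    intro heq
    exact ha (mem_image.mpr ⟨e, by simp [hs], by simp [forbidden, hs, ← heq]⟩)
  by_cases ht : G.tgt e = v
  · rw [ht, Function.update_self, Function.update_of_ne hs]
    intro heq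
    exact ha (mem_image.mpr ⟨e, by simp [ht], by simp [forbidden, hs, ← heq]⟩)
  · rw [Function.update_of_ne hs, Function.update_of_ne ht]
    simp only [c₀, dif_neg hs, dif_neg ht]
    exact hc' ⟨e, hs, ht⟩

theorem GroupColorable.of_zmod3_of_six_le_card [Fintype Γ] (hΓ : 6 ≤ Fintype.card Γ)
    {G : Multigraph} (h : G.GroupColorable (ZMod 3)) : G.GroupColorable Γ := by
  induction hn : Fintype.card G.V generalizing G with
  | zero =>
    have : IsEmpty G.V := Fintype.card_eq_zero_iff.mp hn
    exact fun _ => ⟨isEmptyElim, fun e => isEmptyElim (G.src e)⟩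
  | succ n ih =>
    have : Nonempty G.V := Fintype.card_pos_iff.mp (by omega)
    obtain ⟨v, hv⟩ := exists_degree_lt_six_of_groupColorable_zmod3 h
    exact .of_deleteVertex (by omega) <|
      ih (h.deleteVertex v) (by rw [card_deleteVertex, hn, Nat.add_sub_cancel])

end Multigraph

/-- If a graph `G` is `ℤ₃`-colorable, then `G` is `Γ`-colorable for every
finite abelian group `Γ` with `|Γ| ≥ 5` (i.e. `h(3) ≤ 5`). -/
theorem statement15 (G : Multigraph) (h : G.GroupColorable (ZMod 3))
    (Γ : Type) [AddCommGroup Γ] [Fintype Γ] (hΓ : 5 ≤ Fintype.card Γ) :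
    G.GroupColorable Γ := by
  rcases hΓ.eq_or_lt with hΓ5 | hΓ6
  · have : Fact (Nat.Prime 5) := ⟨by norm_num⟩
    obtain ⟨g, hg⟩ := exists_prime_addOrderOf_dvd_card 5 hΓ5.dvd
    exact h.of_zmod_of_le_addOrderOf hg.ge
  · exact h.of_zmod3_of_six_le_card hΓ6
end
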